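/- arXiv:2311.18020 — 2 statements merged into one kernel-verified Lean document; each statement's English description precedes it below -/
import Mathlib

section
/- Let E be a real symmetric negative definite n×n matrix with eigenvalues in [-e₂, -e₁] for 0 < e₁ ≤ e₂, κ > 0, and P = κ ∫₀^∞ exp(Eζ)ᵀ exp(Eζ) dζ. Then for all v ∈ ℝⁿ, (κ/(2 e₂)) ‖v‖² ≤ vᵀ P v ≤ (κ/(2 e₁)) ‖v‖². -/
open scoped Matrix
open MeasureTheory Set


lemma aux_exp_integrableOn {c : ℝ} (hc : c < 0) :
    IntegrableOn (fun x : ℝ => Real.exp (c * x)) (Ioi 0) := by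
  have := exp_neg_integrableOn_Ioi 0 (neg_pos.mpr hc)
  simpa using this

lemma aux_integral_exp_mul_Ioi {c : ℝ} (hc : c < 0) :
    ∫ x in Ioi (0:ℝ), Real.exp (c * x) = -1 / c := by
  have hc0 : c ≠ 0 := ne_of_lt hc
  have hderiv : ∀ x ∈ Ioi (0:ℝ), HasDerivAt (fun x => c⁻¹ * Real.exp (c * x))
      (Real.exp (c * x)) x := by
    intro x _
    have h1 : HasDerivAt (fun x : ℝ => c * x) c x := by
      simpa using (hasDerivAt_id x).const_mul c
    have h3 := ((Real.hasDerivAt_exp (c * x)).comp x h1).const_mul c⁻¹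
    convert h3 using 1
    · rfl
    · rfl
    · rfl
    field_simp
  have hcont : ContinuousWithinAt (fun x => c⁻¹ * Real.exp (c * x)) (Ici (0:ℝ)) 0 :=
    (Continuous.continuousWithinAt (by continuity))
  have htend : Filter.Tendsto (fun x => c⁻¹ * Real.exp (c * x)) Filter.atTop (nhds 0) := by
    have h1 : Filter.Tendsto (fun x : ℝ => c * x) Filter.atTop Filter.atBot :=
      Filter.tendsto_id.const_mul_atTop_of_neg hc
    have := (Real.tendsto_exp_atBot.comp h1).const_mul c⁻¹
    simpa using this
  have := integral_Ioi_of_hasDerivAt_of_tendsto hcont hderiv (aux_exp_integrableOn hc) htend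
  rw [this]
  simp
  field_simp


/-- If `E` is real symmetric with eigenvalues in `[-e₂, -e₁]`, `0 < e₁ ≤ e₂`,
`κ > 0`, and `P = κ ∫₀^∞ exp(Eζ)ᵀ exp(Eζ) dζ` (defined entrywise), then
`(κ/(2e₂)) ‖v‖² ≤ vᵀ P v ≤ (κ/(2e₁)) ‖v‖²` for all `v`. -/
theorem lyapunov_integral_quadratic_form_bounds
    (n : ℕ) (E : Matrix (Fin n) (Fin n) ℝ) (hE : E.IsHermitian)
    (e₁ e₂ : ℝ) (he₁ : 0 < e₁) (he₁₂ : e₁ ≤ e₂)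
    (heig : ∀ i, -e₂ ≤ hE.eigenvalues i ∧ hE.eigenvalues i ≤ -e₁)
    (κ : ℝ) (hκ : 0 < κ)
    (P : Matrix (Fin n) (Fin n) ℝ)
    (hP : ∀ i j, P i j = κ * ∫ ζ in Set.Ioi (0 : ℝ),
      ((NormedSpace.exp (ζ • E))ᵀ * NormedSpace.exp (ζ • E)) i j) :
    ∀ v : EuclideanSpace ℝ (Fin n),
      κ / (2 * e₂) * ‖v‖ ^ 2 ≤ (v : Fin n → ℝ) ⬝ᵥ P.mulVec v ∧
      (v : Fin n → ℝ) ⬝ᵥ P.mulVec v ≤ κ / (2 * e₁) * ‖v‖ ^ 2 := by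
  set lam := hE.eigenvalues with hlam
  set U : Matrix (Fin n) (Fin n) ℝ := (hE.eigenvectorUnitary : Matrix (Fin n) (Fin n) ℝ)
    with hUdef
  have hUmem := hE.eigenvectorUnitary.2
  rw [Unitary.mem_iff] at hUmem
  have hU2 : star U * U = 1 := hUmem.1
  have hU1 : U * star U = 1 := hUmem.2
  have hlamneg : ∀ k, lam k < 0 := fun k => lt_of_le_of_lt (heig k).2 (by linarith)
  have h2lamneg : ∀ k, 2 * lam k < 0 := fun k => by have := hlamneg k; linarith
  have hspec : E = U * Matrix.diagonal lam * star U := by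
    have := hE.spectral_theorem
    simpa [RCLike.ofReal_real_eq_id] using this
  have hUunit : IsUnit U := ⟨⟨U, star U, hU1, hU2⟩, rfl⟩
  have hUinv : U⁻¹ = star U := Matrix.inv_eq_left_inv hU2
  have hsU : star U = Uᵀ := by
    ext i j
    simp [Matrix.star_apply]
  -- exponential formula
  have hexp : ∀ ζ : ℝ, NormedSpace.exp (ζ • E)
      = U * Matrix.diagonal (fun k => Real.exp (ζ * lam k)) * star U := by
    intro ζ
    have hdiag : Matrix.diagonal (fun k => ζ * lam k) = ζ • Matrix.diagonal lam := by
      ext i j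
      by_cases h : i = j <;> simp [h, Matrix.diagonal_apply]
    have hsmul : ζ • E = U * Matrix.diagonal (fun k => ζ * lam k) * star U := by
      rw [hspec, hdiag, mul_smul_comm, smul_mul_assoc]
    rw [hsmul, ← hUinv, Matrix.exp_conj U _ hUunit, Matrix.exp_diagonal, hUinv]
    congr 2
    rw [Pi.exp_def]
    funext k
    rw [← Real.exp_eq_exp_ℝ]
  -- the integrand as a conjugated diagonal matrix
  have hQ : ∀ ζ : ℝ, (NormedSpace.exp (ζ • E))ᵀ * NormedSpace.exp (ζ • E)
      = U * Matrix.diagonal (fun k => Real.exp (2 * lam k * ζ)) * star U := by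
    intro ζ
    have hsymm : (U * Matrix.diagonal (fun k => Real.exp (ζ * lam k)) * star U)ᵀ
        = U * Matrix.diagonal (fun k => Real.exp (ζ * lam k)) * star U := by
      rw [hsU, Matrix.transpose_mul, Matrix.transpose_mul, Matrix.diagonal_transpose,
        Matrix.transpose_transpose, mul_assoc]
    have hdd : Matrix.diagonal (fun k => Real.exp (ζ * lam k))
        * Matrix.diagonal (fun k => Real.exp (ζ * lam k))
        = Matrix.diagonal (fun k => Real.exp (2 * lam k * ζ)) := by
      have hfun : (fun k => Real.exp (ζ * lam k) * Real.exp (ζ * lam k))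
          = fun k => Real.exp (2 * lam k * ζ) := by
        funext k
        rw [← Real.exp_add]
        congr 1
        ring
      rw [Matrix.diagonal_mul_diagonal, hfun]
    rw [hexp ζ, hsymm, ← hdd]
    simp only [mul_assoc]
    rw [← mul_assoc (star U) U, hU2, one_mul]
  -- entries of a conjugated diagonal matrix
  have hentry : ∀ (d : Fin n → ℝ) (i j : Fin n),
      (U * Matrix.diagonal d * star U) i j = ∑ k, (U i k * U j k) * d k := by
    intro d i j
    rw [Matrix.mul_apply]
    refine Finset.sum_congr rfl fun k _ => ?_
    simp [Matrix.mul_diagonal, Matrix.star_apply]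
    ring
  -- closed form of P
  have hPform : P = U * Matrix.diagonal (fun k => κ * (-1 / (2 * lam k))) * star U := by
    ext i j
    rw [hP i j]
    simp only [hQ, hentry]
    rw [MeasureTheory.integral_finset_sum]
    · rw [Finset.mul_sum]
      refine Finset.sum_congr rfl fun k _ => ?_
      rw [MeasureTheory.integral_const_mul, aux_integral_exp_mul_Ioi (h2lamneg k)]
      ring
    · intro k _
      exact (aux_exp_integrableOn (h2lamneg k)).const_mul _
  intro v
  set v' : Fin n → ℝ := (v : Fin n → ℝ) with hv'
  set w : Fin n → ℝ := (star U).mulVec v' with hw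
  have hvecmul : Matrix.vecMul v' U = w := by
    ext k
    rw [hw]
    simp [Matrix.vecMul, Matrix.mulVec, dotProduct, Matrix.star_apply, mul_comm]
  have hquad : v' ⬝ᵥ P.mulVec v' = ∑ k, (κ * (-1 / (2 * lam k))) * (w k)^2 := by
    rw [hPform, mul_assoc, ← Matrix.mulVec_mulVec, Matrix.dotProduct_mulVec, hvecmul,
      ← Matrix.mulVec_mulVec]
    simp only [dotProduct, Matrix.mulVec_diagonal, sq]
    exact Finset.sum_congr rfl fun k _ => by ring
  have hww : ∑ k, (w k)^2 = v' ⬝ᵥ v' := by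
    have h1 : v' ⬝ᵥ (U * star U).mulVec v' = v' ⬝ᵥ v' := by rw [hU1, Matrix.one_mulVec]
    rw [← h1, ← Matrix.mulVec_mulVec, Matrix.dotProduct_mulVec, hvecmul]
    simp [dotProduct, sq, hw]
  have hnorm : ‖v‖^2 = ∑ k, (w k)^2 := by
    rw [hww]
    rw [EuclideanSpace.norm_eq, Real.sq_sqrt (by positivity)]
    simp [dotProduct, sq, Real.norm_eq_abs, sq_abs, abs_mul_abs_self, hv']
  have hwknn : ∀ k, (0:ℝ) ≤ (w k)^2 := fun k => sq_nonneg _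
  constructor
  · rw [hquad, hnorm, Finset.mul_sum]
    refine Finset.sum_le_sum fun k _ => ?_
    have hb : κ / (2 * e₂) ≤ κ * (-1 / (2 * lam k)) := by
      have hlk := hlamneg k
      have h := (heig k).1
      rw [show κ * (-1 / (2 * lam k)) = κ / (2 * (-lam k)) by field_simp]
      gcongr
      all_goals first | positivity | linarith
    exact mul_le_mul_of_nonneg_right hb (hwknn k)
  · rw [hquad, hnorm, Finset.mul_sum]
    refine Finset.sum_le_sum fun k _ => ?_
    have hb : κ * (-1 / (2 * lam k)) ≤ κ / (2 * e₁) := by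
      have hlk := hlamneg k
      have h := (heig k).2
      rw [show κ * (-1 / (2 * lam k)) = κ / (2 * (-lam k)) by field_simp]
      gcongr
      all_goals first | positivity | linarith
    exact mul_le_mul_of_nonneg_right hb (hwknn k)
end

section
/- Let P be a symmetric positive definite matrix with ‖P‖ ≤ κ/(2e₁), let E satisfy P E + Eᵀ P = -κ I, and suppose F(u) = E(u - u*) + ĝ(u) with ‖ĝ(u)‖ ≤ L ‖u - u*‖². Then for all u with ‖u - u*‖ < e₁/L, one has 2 (u - u*)ᵀ P F(u) ≤ -κ ‖u - u*‖² + (κ L / e₁) ‖u - u*‖³ < 0 whenever u ≠ u*. -/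
open scoped RealInnerProductSpace

/-- If `P` is symmetric positive definite with `‖P‖ ≤ κ/(2e₁)`, satisfies the
Lyapunov equation `P E + Eᵀ P = -κ I` (as quadratic forms), and
`F(u) = E(u - u*) + ĝ(u)` with `‖ĝ(u)‖ ≤ L ‖u - u*‖²`, then for `‖u - u*‖ < e₁/L`,
`2(u - u*)ᵀ P F(u) ≤ -κ‖u - u*‖² + (κL/e₁)‖u - u*‖³ < 0` whenever `u ≠ u*`. -/
theorem reduced_dynamics_lyapunov_decrease
    (n : ℕ)
    (P E : EuclideanSpace ℝ (Fin n) →L[ℝ] EuclideanSpace ℝ (Fin n))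
    (κ e₁ L : ℝ) (hκ : 0 < κ) (he₁ : 0 < e₁) (hL : 0 < L)
    (hPsymm : ∀ x y, ⟪P x, y⟫ = ⟪x, P y⟫)
    (hPpos : ∀ x, x ≠ 0 → 0 < ⟪x, P x⟫)
    (hPnorm : ‖P‖ ≤ κ / (2 * e₁))
    (hLyap : ∀ x y, ⟪P (E x), y⟫ + ⟪P (E y), x⟫ = -κ * ⟪x, y⟫)
    (ustar : EuclideanSpace ℝ (Fin n))
    (F g : EuclideanSpace ℝ (Fin n) → EuclideanSpace ℝ (Fin n))
    (hF : ∀ u, F u = E (u - ustar) + g u)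
    (hg : ∀ u, ‖g u‖ ≤ L * ‖u - ustar‖ ^ 2) :
    ∀ u, ‖u - ustar‖ < e₁ / L →
      2 * ⟪u - ustar, P (F u)⟫ ≤ -κ * ‖u - ustar‖ ^ 2 + (κ * L / e₁) * ‖u - ustar‖ ^ 3 ∧
      (u ≠ ustar → 2 * ⟪u - ustar, P (F u)⟫ < 0) := by
  intro u hu
  set v := u - ustar with hv
  have hnv : (0:ℝ) ≤ ‖v‖ := norm_nonneg _
  -- key identity
  have hEv : 2 * ⟪v, P (E v)⟫ = -κ * ‖v‖ ^ 2 := by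
    have h := hLyap v v
    have hsym := hPsymm (E v) v
    rw [real_inner_self_eq_norm_sq] at h
    nlinarith [h, hsym, real_inner_comm v (P (E v))]
  have hexp : ⟪v, P (F u)⟫ = ⟪v, P (E v)⟫ + ⟪v, P (g u)⟫ := by
    rw [hF u, ← hv, map_add, inner_add_right]
  -- bound the perturbation term
  have hPg : |⟪v, P (g u)⟫| ≤ (κ / (2 * e₁)) * L * ‖v‖ ^ 3 := by
    have h1 : |⟪v, P (g u)⟫| ≤ ‖v‖ * ‖P (g u)‖ := abs_real_inner_le_norm _ _
    have h2 : ‖P (g u)‖ ≤ ‖P‖ * ‖g u‖ := P.le_opNorm _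
    have h3 : ‖g u‖ ≤ L * ‖v‖ ^ 2 := hg u
    have hPn : (0:ℝ) ≤ ‖P‖ := norm_nonneg _
    have hgn : (0:ℝ) ≤ ‖g u‖ := norm_nonneg _
    calc |⟪v, P (g u)⟫| ≤ ‖v‖ * ‖P (g u)‖ := h1
      _ ≤ ‖v‖ * (‖P‖ * ‖g u‖) := by nlinarith
      _ ≤ ‖v‖ * ((κ / (2 * e₁)) * (L * ‖v‖ ^ 2)) := by
          apply mul_le_mul_of_nonneg_left _ hnv
          nlinarith
      _ = (κ / (2 * e₁)) * L * ‖v‖ ^ 3 := by ring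
  have hmain : 2 * ⟪v, P (F u)⟫ ≤ -κ * ‖v‖ ^ 2 + (κ * L / e₁) * ‖v‖ ^ 3 := by
    have habs := abs_le.mp hPg
    have : (κ * L / e₁) * ‖v‖ ^ 3 = 2 * ((κ / (2 * e₁)) * L * ‖v‖ ^ 3) := by
      field_simp
    rw [hexp]
    nlinarith [habs.2, hEv]
  refine ⟨hmain, fun hne => ?_⟩
  have hvne : v ≠ 0 := sub_ne_zero.mpr hne
  have hvpos : 0 < ‖v‖ := norm_pos_iff.mpr hvne
  have hcoef : (κ * L / e₁) * ‖v‖ < κ := by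
    have h' : L * ‖v‖ < e₁ := by
      have := (lt_div_iff₀ hL).mp hu
      linarith
    rw [div_mul_eq_mul_div, div_lt_iff₀ he₁]
    calc κ * L * ‖v‖ = κ * (L * ‖v‖) := by ring
      _ < κ * e₁ := by exact mul_lt_mul_of_pos_left h' hκ
  have : -κ * ‖v‖ ^ 2 + (κ * L / e₁) * ‖v‖ ^ 3 < 0 := by
    have h2 := mul_lt_mul_of_pos_right hcoef (pow_pos hvpos 2)
    nlinarith [h2]
  linarith
end
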